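/- arXiv:2605.23810 — 3 statements merged into one kernel-verified Lean document; each statement's English description precedes it below -/
import Mathlib

section
/- Let n > 2s > 0, let f : [0,∞) → ℝ be continuous with f ≥ 0, and suppose (n+2s) f(u) − (n−2s) u f'(u) ≥ 0 for all u > 0 (f differentiable on (0,∞)). Define F(u) = ∫₀ᵘ f(t) dt and 𝒴(u) = 2n F(u) − (n−2s) u f(u). Then 𝒴(u) ≥ 0 for all u ≥ 0. -/
/-!
`𝒴(0) = 0` and `𝒴' = (n+2s) f − (n−2s) u f' ≥ 0` on `(0,∞)`, so `𝒴` is nondecreasing on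
`[0,∞)` and hence nonnegative there.
-/

open Set

theorem ContinuousOn.hasDerivAt_integral_of_mem_Ioo {f : ℝ → ℝ} {a b x : ℝ}
    (hf : ContinuousOn f (Icc a b)) (hx : x ∈ Ioo a b) :
    HasDerivAt (fun y => ∫ t in a..y, f t) (f x) x :=
  intervalIntegral.integral_hasDerivAt_right
    ((hf.mono (Icc_subset_Icc le_rfl hx.2.le)).intervalIntegrable_of_Icc hx.1.le)
    ((hf.mono Ioo_subset_Icc_self).stronglyMeasurableAtFilter isOpen_Ioo x hx)
    (hf.continuousAt (Icc_mem_nhds hx.1 hx.2))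

theorem HasDerivAt.mul_sub_mul_id_mul {F f : ℝ → ℝ} {f' x : ℝ} (a b : ℝ)
    (hF : HasDerivAt F (f x) x) (hf : HasDerivAt f f' x) :
    HasDerivAt (fun y => a * F y - b * y * f y) ((a - b) * f x - b * x * f') x := by
  have hbid : HasDerivAt (fun y => b * y) b x := by
    simpa using (hasDerivAt_id x).const_mul b
  exact ((hF.const_mul a).sub (hbid.mul hf)).congr_deriv (by ring)

theorem mul_integral_sub_mul_mul_nonneg (a b : ℝ) {f f' : ℝ → ℝ} {u : ℝ} (hu : 0 ≤ u)
    (hf : ContinuousOn f (Icc 0 u)) (hderiv : ∀ x ∈ Ioo 0 u, HasDerivAt f (f' x) x)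
    (hineq : ∀ x ∈ Ioo 0 u, b * x * f' x ≤ (a - b) * f x) :
    0 ≤ a * (∫ t in (0:ℝ)..u, f t) - b * u * f u := by
  set G : ℝ → ℝ := fun y => a * (∫ t in (0:ℝ)..y, f t) - b * y * f y
  have hG_cont : ContinuousOn G (Icc 0 u) := by
    have hprim : ContinuousOn (fun y => ∫ t in (0:ℝ)..y, f t) (Icc 0 u) := by
      simpa [uIcc_of_le hu] using
        intervalIntegral.continuousOn_primitive_interval (hf.integrableOn_Icc.mono_set
          (uIcc_of_le hu).subset)
    fun_prop
  have hG_mono : MonotoneOn G (Icc 0 u) := by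
    refine monotoneOn_of_hasDerivWithinAt_nonneg (convex_Icc 0 u) hG_cont
      (f' := fun x => (a - b) * f x - b * x * f' x) (fun x hx => ?_) (fun x hx => ?_)
    · rw [interior_Icc] at hx
      exact ((hf.hasDerivAt_integral_of_mem_Ioo hx).mul_sub_mul_id_mul a b
        (hderiv x hx)).hasDerivWithinAt
    · rw [interior_Icc] at hx
      exact sub_nonneg.2 (hineq x hx)
  simpa [G] using hG_mono (left_mem_Icc.2 hu) (right_mem_Icc.2 hu) hu

theorem Y_nonneg_general (n s : ℝ)
    (f f' : ℝ → ℝ) (hcont : ContinuousOn f (Set.Ici 0))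
    (hderiv : ∀ u : ℝ, 0 < u → HasDerivAt f (f' u) u)
    (hineq : ∀ u : ℝ, 0 < u → (n - 2 * s) * u * f' u ≤ (n + 2 * s) * f u) :
    ∀ u : ℝ, 0 ≤ u →
      0 ≤ 2 * n * (∫ t in (0:ℝ)..u, f t) - (n - 2 * s) * u * f u := fun u hu =>
  mul_integral_sub_mul_mul_nonneg (2 * n) (n - 2 * s) hu (hcont.mono Icc_subset_Ici_self)
    (fun x hx => hderiv x hx.1)
    (fun x hx => by convert hineq x hx.1 using 1; ring)

/-- For `0 < 2s < n`, `f` continuous and nonnegative on `[0,∞)`, differentiable on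
`(0,∞)` with `(n+2s) f u − (n−2s) u f' u ≥ 0` for `u > 0`, the function
`𝒴(u) = 2n F(u) − (n−2s) u f(u)` (with `F(u) = ∫₀ᵘ f`) is nonnegative for `u ≥ 0`. -/
theorem Y_nonneg (n s : ℝ) (hs : 0 < s) (hns : 2 * s < n)
    (f f' : ℝ → ℝ) (hcont : ContinuousOn f (Set.Ici 0))
    (hfnonneg : ∀ u : ℝ, 0 ≤ u → 0 ≤ f u)
    (hderiv : ∀ u : ℝ, 0 < u → HasDerivAt f (f' u) u)
    (hineq : ∀ u : ℝ, 0 < u → (n - 2 * s) * u * f' u ≤ (n + 2 * s) * f u) :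
    ∀ u : ℝ, 0 ≤ u →
      0 ≤ 2 * n * (∫ t in (0:ℝ)..u, f t) - (n - 2 * s) * u * f u :=
  Y_nonneg_general n s f f' hcont hderiv hineq
end

section
/- Let n > 2s > 0, c > 0, and let f : [0,∞) → ℝ be continuous, nonnegative, differentiable on (0,∞), with (n+2s) f(u) − (n−2s) u f'(u) ≥ 0 for all u > 0. Let F(u) = ∫₀ᵘ f. Then the function Θ : (0,∞) → ℝ, Θ(r) = F(r^{n−2s} c) / r^{2n}, is nonincreasing. -/
/-!
Writing `u = r^(n-2s) c` and `F(u) = ∫₀ᵘ f`, the quotient rule gives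
`Θ'(r) = ((n-2s) u f(u) - 2n F(u)) / r^(2n+1)`. The numerator is `≤ 0` because
`G(u) = 2n F(u) - (n-2s) u f(u)` vanishes at `0` and has derivative
`(n+2s) f(u) - (n-2s) u f'(u) ≥ 0`.
-/

open Set intervalIntegral

theorem hasDerivAt_integral_of_continuousOn_Ici {f : ℝ → ℝ} (hf : ContinuousOn f (Ici 0))
    {u : ℝ} (hu : 0 < u) : HasDerivAt (fun x => ∫ t in (0:ℝ)..x, f t) (f u) u :=
  have hf_at : ∀ x ∈ Ioi (0:ℝ), ContinuousAt f x := fun x hx => hf.continuousAt (Ici_mem_nhds hx)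
  integral_hasDerivAt_right
    ((hf.mono <| by simp [uIcc_of_le hu.le, Icc_subset_Ici_self]).intervalIntegrable)
    (ContinuousAt.stronglyMeasurableAtFilter isOpen_Ioi hf_at u hu) (hf_at u hu)

theorem mul_mul_le_mul_integral_of_deriv_le {f f' : ℝ → ℝ} {k p : ℝ}
    (hf : ContinuousOn f (Ici 0)) (hf' : ∀ u, 0 < u → HasDerivAt f (f' u) u)
    (hle : ∀ u, 0 < u → p * u * f' u ≤ (k - p) * f u) {u : ℝ} (hu : 0 ≤ u) :
    p * u * f u ≤ k * ∫ t in (0:ℝ)..u, f t := by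
  set G : ℝ → ℝ := fun x => k * (∫ t in (0:ℝ)..x, f t) - p * x * f x
  have hfu : ContinuousOn f (Icc 0 u) := hf.mono Icc_subset_Ici_self
  have hG_cont : ContinuousOn G (Icc 0 u) := by
    have := continuousOn_primitive_interval (μ := MeasureTheory.volume) (a := 0) (b := u)
      (by rw [uIcc_of_le hu]; exact hfu.integrableOn_Icc)
    rw [uIcc_of_le hu] at this
    fun_prop
  have hG_deriv : ∀ x ∈ Ioo 0 u, HasDerivAt G ((k - p) * f x - p * x * f' x) x := by
    intro x hx
    have h := ((hasDerivAt_integral_of_continuousOn_Ici hf hx.1).const_mul k).sub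
      (((hasDerivAt_id' x).const_mul p).mul (hf' x hx.1))
    exact h.congr_deriv (by ring)
  have hG_mono : MonotoneOn G (Icc 0 u) := by
    refine monotoneOn_of_hasDerivWithinAt_nonneg (convex_Icc 0 u) hG_cont
      (fun x hx => (hG_deriv x (by rwa [interior_Icc] at hx)).hasDerivWithinAt) fun x hx => ?_
    rw [interior_Icc] at hx
    linarith [hle x hx.1]
  have hG_le := hG_mono (left_mem_Icc.2 hu) (right_mem_Icc.2 hu) hu
  simp only [G, integral_same] at hG_le
  linarith

theorem hasDerivAt_comp_rpow_div_rpow {F f : ℝ → ℝ} {p k c r : ℝ} (hr : 0 < r)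
    (hF : HasDerivAt F (f (r ^ p * c)) (r ^ p * c)) :
    HasDerivAt (fun r => F (r ^ p * c) / r ^ k)
      ((p * (r ^ p * c) * f (r ^ p * c) - k * F (r ^ p * c)) / r ^ (k + 1)) r := by
  have hu := hF.comp r ((Real.hasDerivAt_rpow_const (p := p) (Or.inl hr.ne')).mul_const c)
  refine (hu.div (Real.hasDerivAt_rpow_const (p := k) (Or.inl hr.ne'))
    (Real.rpow_pos_of_pos hr k).ne').congr_deriv ?_
  rw [Real.rpow_sub_one hr.ne', Real.rpow_sub_one hr.ne', Real.rpow_add_one hr.ne']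
  rw [Function.comp_apply]
  have := (Real.rpow_pos_of_pos hr k).ne'
  field_simp

theorem antitoneOn_comp_rpow_div_rpow {F f : ℝ → ℝ} {p k c : ℝ} (hc : 0 < c)
    (hF : ∀ u, 0 < u → HasDerivAt F (f u) u) (hle : ∀ u, 0 < u → p * u * f u ≤ k * F u) :
    AntitoneOn (fun r => F (r ^ p * c) / r ^ k) (Ioi 0) := by
  have hu : ∀ r : ℝ, 0 < r → 0 < r ^ p * c := fun r hr => by positivity
  have hΘ := fun r (hr : 0 < r) => hasDerivAt_comp_rpow_div_rpow (k := k) hr (hF _ (hu r hr))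
  refine antitoneOn_of_hasDerivWithinAt_nonpos (convex_Ioi 0)
    (fun r hr => (hΘ r hr).continuousAt.continuousWithinAt)
    (fun r hr => (hΘ r (by rwa [interior_Ioi] at hr)).hasDerivWithinAt) fun r hr => ?_
  rw [interior_Ioi] at hr
  exact div_nonpos_of_nonpos_of_nonneg (sub_nonpos.2 (hle _ (hu r hr)))
    (Real.rpow_pos_of_pos hr _).le

theorem theta_antitone_general (n s c : ℝ) (hc : 0 < c)
    (f f' : ℝ → ℝ) (hcont : ContinuousOn f (Set.Ici 0))
    (hderiv : ∀ u : ℝ, 0 < u → HasDerivAt f (f' u) u)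
    (hineq : ∀ u : ℝ, 0 < u → (n - 2 * s) * u * f' u ≤ (n + 2 * s) * f u) :
    AntitoneOn
      (fun r : ℝ => (∫ t in (0:ℝ)..(r ^ (n - 2 * s) * c), f t) / r ^ (2 * n))
      (Set.Ioi 0) :=
  antitoneOn_comp_rpow_div_rpow hc (fun _ hu => hasDerivAt_integral_of_continuousOn_Ici hcont hu)
    fun _ hu => mul_mul_le_mul_integral_of_deriv_le (k := 2 * n) hcont hderiv
      (fun v hv => by convert hineq v hv using 2; ring) hu.le

/-- For `0 < 2s < n`, `c > 0`, and `f` continuous, nonnegative on `[0,∞)`,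
differentiable on `(0,∞)` with `(n+2s) f u ≥ (n−2s) u f' u` for `u > 0`,
the function `Θ(r) = F(r^{n−2s} c) / r^{2n}` is nonincreasing on `(0,∞)`,
where `F(u) = ∫₀ᵘ f`. -/
theorem theta_antitone (n s c : ℝ) (hs : 0 < s) (hns : 2 * s < n) (hc : 0 < c)
    (f f' : ℝ → ℝ) (hcont : ContinuousOn f (Set.Ici 0))
    (hfnonneg : ∀ u : ℝ, 0 ≤ u → 0 ≤ f u)
    (hderiv : ∀ u : ℝ, 0 < u → HasDerivAt f (f' u) u)
    (hineq : ∀ u : ℝ, 0 < u → (n - 2 * s) * u * f' u ≤ (n + 2 * s) * f u) :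
    AntitoneOn
      (fun r : ℝ => (∫ t in (0:ℝ)..(r ^ (n - 2 * s) * c), f t) / r ^ (2 * n))
      (Set.Ioi 0) :=
  theta_antitone_general n s c hc f f' hcont hderiv hineq
end

section
/- Let n ≥ 1, 0 < s < 1, and let w : ℝⁿ × (0,∞) → ℝ be twice continuously differentiable. Writing z = (x, y) ∈ ℝⁿ × (0,∞) and ∇ for the full gradient in ℝ^{n+1}, if div(y^{1−2s} ∇w) = 0 on an open set U ⊆ ℝⁿ × (0,∞), then on U one has the pointwise identity div( y^{1−2s} ⟨z, ∇w⟩ ∇w − y^{1−2s} (|∇w|²/2) z ) + ((n−2s)/2) y^{1−2s} |∇w|² = 0. -/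
/-! Write `a = y^{1−2s}` and `V = ∇w`, so that the field is `⟨z,V⟩ • (a V) − (|V|²/2) • (a z)`.
By the product rule for the divergence, `div(a V) = 0`, `div(a z) = (n+1) a + ⟨∇a, z⟩` and
Euler's identity `⟨∇a, z⟩ = (1−2s) a`, its divergence is
`a (|V|² + ⟨z, D²w V⟩) − (|V|²/2)(n + 2 − 2s) a − a ⟨V, D²w z⟩`,
and the two Hessian terms cancel because `D²w` is symmetric. -/

open scoped RealInnerProductSpace

/-- Divergence of a vector field on `ℝᵐ` (Euclidean space): sum of the diagonal
entries of the Fréchet derivative. -/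
noncomputable def divergence (m : ℕ)
    (F : EuclideanSpace ℝ (Fin m) → EuclideanSpace ℝ (Fin m))
    (z : EuclideanSpace ℝ (Fin m)) : ℝ :=
  ∑ i, (fderiv ℝ F z (EuclideanSpace.single i 1)) i

section Calculus

variable {E : Type*} [NormedAddCommGroup E] [InnerProductSpace ℝ E]

theorem fderiv_inner_id_apply {V : E → E} {z : E} (hV : DifferentiableAt ℝ V z) (v : E) :
    fderiv ℝ (fun x => ⟪x, V x⟫) z v = ⟪z, fderiv ℝ V z v⟫ + ⟪v, V z⟫ := by
  rw [fderiv_inner_apply ℝ (f := fun x => x) differentiableAt_fun_id hV, fderiv_fun_id]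
  rfl

theorem fderiv_half_norm_sq_apply {V : E → E} {z : E} (hV : DifferentiableAt ℝ V z) (v : E) :
    fderiv ℝ (fun x => ‖V x‖ ^ 2 / 2) z v = ⟪V z, fderiv ℝ V z v⟫ := by
  simp_rw [div_eq_mul_inv]
  rw [(hV.hasFDerivAt.norm_sq.mul_const _).fderiv]
  simp

theorem inner_fderiv_gradient_apply [CompleteSpace E] (f : E → ℝ) (x u v : E) :
    ⟪fderiv ℝ (gradient f) x u, v⟫ = fderiv ℝ (fderiv ℝ f) x u v := by
  rw [show gradient f = (InnerProductSpace.toDual ℝ E).symm ∘ fderiv ℝ f from rfl,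
    LinearIsometryEquiv.comp_fderiv]
  exact InnerProductSpace.toDual_symm_apply

theorem inner_fderiv_gradient_comm [CompleteSpace E] {f : E → ℝ} {x : E}
    (hf : ContDiffAt ℝ 2 f x) (u v : E) :
    ⟪fderiv ℝ (gradient f) x u, v⟫ = ⟪fderiv ℝ (gradient f) x v, u⟫ := by
  simp only [inner_fderiv_gradient_apply]
  exact hf.isSymmSndFDerivAt (by simp) u v

theorem ContDiff.gradient [CompleteSpace E] {f : E → ℝ} {n : WithTop ℕ∞}
    (hf : ContDiff ℝ (n + 1) f) : ContDiff ℝ n (gradient f) :=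
  (InnerProductSpace.toDual ℝ E).symm.contDiff.comp (hf.fderiv_right le_rfl)

theorem fderiv_coord_rpow_apply_self {ι : Type*} [Fintype ι] (i : ι) (p : ℝ)
    {z : EuclideanSpace ℝ ι} (hz : z i ≠ 0) :
    fderiv ℝ (fun x : EuclideanSpace ℝ ι => x i ^ p) z z = p * z i ^ p := by
  have h : HasFDerivAt (fun x : EuclideanSpace ℝ ι => x i ^ p)
      ((p * z i ^ (p - 1)) • EuclideanSpace.proj i) z :=
    (EuclideanSpace.proj i : EuclideanSpace ℝ ι →L[ℝ] ℝ).hasFDerivAt.rpow_const (Or.inl hz)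
  rw [h.fderiv]
  simp [Real.rpow_sub_one hz]
  field_simp

end Calculus

section Divergence

variable {m : ℕ}

theorem divergence_sub {F G : EuclideanSpace ℝ (Fin m) → EuclideanSpace ℝ (Fin m)}
    {z : EuclideanSpace ℝ (Fin m)} (hF : DifferentiableAt ℝ F z) (hG : DifferentiableAt ℝ G z) :
    divergence m (fun x => F x - G x) z = divergence m F z - divergence m G z := by
  simp [divergence, fderiv_fun_sub hF hG]

theorem divergence_smul {f : EuclideanSpace ℝ (Fin m) → ℝ}
    {F : EuclideanSpace ℝ (Fin m) → EuclideanSpace ℝ (Fin m)}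
    {z : EuclideanSpace ℝ (Fin m)} (hf : DifferentiableAt ℝ f z) (hF : DifferentiableAt ℝ F z) :
    divergence m (fun x => f x • F x) z = f z * divergence m F z + fderiv ℝ f z (F z) := by
  classical
  have hexpand : F z = ∑ i, F z i • EuclideanSpace.single i (1 : ℝ) := by
    simpa using ((EuclideanSpace.basisFun (Fin m) ℝ).sum_repr (F z)).symm
  conv_rhs => rw [hexpand]
  simp [divergence, fderiv_fun_smul hf hF, Finset.sum_add_distrib, Finset.mul_sum, mul_comm]

theorem divergence_id (z : EuclideanSpace ℝ (Fin m)) : divergence m (fun x => x) z = m := by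
  simp [divergence]

end Divergence

theorem pohozaev_pointwise_general (n : ℕ) (s : ℝ)
    (w : EuclideanSpace ℝ (Fin (n + 1)) → ℝ) (hw : ContDiff ℝ 2 w)
    (U : Set (EuclideanSpace ℝ (Fin (n + 1))))
    (hUpos : ∀ z ∈ U, 0 < z (Fin.last n))
    (hharm : ∀ z ∈ U,
      divergence (n + 1)
        (fun z => (z (Fin.last n)) ^ (1 - 2 * s) • gradient w z) z = 0) :
    ∀ z ∈ U,
      divergence (n + 1)
        (fun z =>
          (z (Fin.last n)) ^ (1 - 2 * s) • (⟪z, gradient w z⟫ • gradient w z) -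
            (z (Fin.last n)) ^ (1 - 2 * s) • ((‖gradient w z‖ ^ 2 / 2) • z)) z +
        ((n - 2 * s) / 2) * (z (Fin.last n)) ^ (1 - 2 * s) *
          ‖gradient w z‖ ^ 2 = 0 := by
  intro z hz
  set a : EuclideanSpace ℝ (Fin (n + 1)) → ℝ := fun x => x (Fin.last n) ^ (1 - 2 * s)
  set V := gradient w
  have hV : Differentiable ℝ V := (ContDiff.gradient (n := 1) hw).differentiable one_ne_zero
  have ha : DifferentiableAt ℝ a z :=
    (EuclideanSpace.proj (Fin.last n)).differentiableAt.rpow_const (Or.inl (hUpos z hz).ne')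
  have haV : DifferentiableAt ℝ (fun x => a x • V x) z := ha.smul (hV z)
  have haz : DifferentiableAt ℝ (fun x => a x • x) z := ha.smul differentiableAt_fun_id
  have hφ : DifferentiableAt ℝ (fun x => ⟪x, V x⟫) z := differentiableAt_fun_id.inner ℝ (hV z)
  have hψ : DifferentiableAt ℝ (fun x => ‖V x‖ ^ 2 / 2) z := by
    simp_rw [div_eq_mul_inv]
    exact ((hV z).norm_sq ℝ).mul_const _
  have hfield : (fun x => a x • (⟪x, V x⟫ • V x) - a x • ((‖V x‖ ^ 2 / 2) • x)) =
      fun x => ⟪x, V x⟫ • (a x • V x) - (‖V x‖ ^ 2 / 2) • (a x • x) := by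
    funext x
    simp only [smul_comm (a x)]
  have hsymm : ⟪z, fderiv ℝ V z (V z)⟫ = ⟪V z, fderiv ℝ V z z⟫ := by
    rw [real_inner_comm, inner_fderiv_gradient_comm hw.contDiffAt, real_inner_comm]
  rw [hfield, divergence_sub (hφ.fun_smul haV) (hψ.fun_smul haz), divergence_smul hφ haV,
    divergence_smul hψ haz, divergence_smul ha differentiableAt_fun_id, divergence_id,
    show divergence (n + 1) (fun x => a x • V x) z = 0 from hharm z hz,
    fderiv_coord_rpow_apply_self _ _ (hUpos z hz).ne']
  simp only [map_smul, fderiv_inner_id_apply (hV z), fderiv_half_norm_sq_apply (hV z),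
    real_inner_smul_left, real_inner_smul_right, real_inner_self_eq_norm_sq, hsymm, a]
  push_cast
  ring

/-- Pointwise Pohozaev (Rellich) identity for the Caffarelli–Silvestre
extension: if `div(y^{1−2s} ∇w) = 0` on an open set `U` in the upper half
space, then
`div(y^{1−2s} ⟨z,∇w⟩∇w − y^{1−2s}(|∇w|²/2) z) + ((n−2s)/2) y^{1−2s} |∇w|² = 0`
on `U`. -/
theorem pohozaev_pointwise (n : ℕ) (hn : 1 ≤ n) (s : ℝ)
    (hs0 : 0 < s) (hs1 : s < 1)
    (w : EuclideanSpace ℝ (Fin (n + 1)) → ℝ) (hw : ContDiff ℝ 2 w)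
    (U : Set (EuclideanSpace ℝ (Fin (n + 1)))) (hU : IsOpen U)
    (hUpos : ∀ z ∈ U, 0 < z (Fin.last n))
    (hharm : ∀ z ∈ U,
      divergence (n + 1)
        (fun z => (z (Fin.last n)) ^ (1 - 2 * s) • gradient w z) z = 0) :
    ∀ z ∈ U,
      divergence (n + 1)
        (fun z =>
          (z (Fin.last n)) ^ (1 - 2 * s) • (⟪z, gradient w z⟫ • gradient w z) -
            (z (Fin.last n)) ^ (1 - 2 * s) • ((‖gradient w z‖ ^ 2 / 2) • z)) z +
        ((n - 2 * s) / 2) * (z (Fin.last n)) ^ (1 - 2 * s) *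
          ‖gradient w z‖ ^ 2 = 0 :=
  pohozaev_pointwise_general n s w hw U hUpos hharm
end
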